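/- Let p ≥ 5 be a prime and let G = ⟨a,b,c | [c,a], [c,b]⟩ be the class-2 exponent-p group on three generators with relations [c,a] = [c,b] = 1 (group 4.3.1, of order p^4). Then the number of conjugacy classes of G is p^3 + p^2 − p, and the automorphism group of G has order (p − 1)(p^2 − 1)(p^2 − p)p^5. -/

import Mathlib

/-- The commutator `u⁻¹v⁻¹uv`. -/
def fgComm {α : Type} (u v : FreeGroup α) : FreeGroup α := u⁻¹ * v⁻¹ * u * v

/-- The relator set for the largest class-2 exponent-`p` group on `n` generators
satisfying the extra relations `R`: we add all `p`-th powers and all triple commutators. -/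
def classTwoRels (p n : ℕ) (R : Set (FreeGroup (Fin n))) : Set (FreeGroup (Fin n)) :=
  R ∪ (Set.range fun w : FreeGroup (Fin n) => w ^ p) ∪
    {x | ∃ u v w : FreeGroup (Fin n), x = fgComm (fgComm u v) w}

/-- The largest class-2 exponent-`p` group on `n` generators satisfying the relations `R`. -/
def ClassTwoGroup (p n : ℕ) (R : Set (FreeGroup (Fin n))) : Type :=
  PresentedGroup (classTwoRels p n R)

instance (p n : ℕ) (R : Set (FreeGroup (Fin n))) : Group (ClassTwoGroup p n R) := by
  unfold ClassTwoGroup; infer_instance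

/-- `H` is a class-3 descendant of `G` of order `p^9` with exponent `p`. -/
def IsClass3Descendant (p : ℕ) (G : Type) [Group G] (H : Type) [Group H] : Prop :=
  Nat.card H = p ^ 9 ∧ Monoid.exponent H = p ∧
    (⊤ : Subgroup H).lowerCentralSeries 3 = ⊥ ∧ (⊤ : Subgroup H).lowerCentralSeries 2 ≠ ⊥ ∧
    Nonempty ((H ⧸ (⊤ : Subgroup H).lowerCentralSeries 2) ≃* G)

/-- The multiplication underlying a group structure. -/
def mulOfGroup {α : Type} (g : Group α) : Mul α := by letI := g; infer_instance

/-- `P` has exactly `k` isomorphism classes of groups satisfying it. -/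
def IsIsoClassCount (P : (H : Type) → Group H → Prop) (k : ℕ) : Prop :=
  ∃ (H : Fin k → Type) (inst : (i : Fin k) → Group (H i)),
    (∀ i, P (H i) (inst i)) ∧
    (∀ i j : Fin k, i ≠ j →
      ¬ Nonempty (@MulEquiv (H i) (H j) (mulOfGroup (inst i)) (mulOfGroup (inst j)))) ∧
    (∀ (K : Type) (instK : Group K), P K instK →
      ∃ i, Nonempty (@MulEquiv K (H i) (mulOfGroup instK) (mulOfGroup (inst i))))

/-- `G` has exactly `k` class-3 descendants of order `p^9` with exponent `p`,
up to isomorphism. -/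
def DescendantCount (p : ℕ) (G : Type) [Group G] (k : ℕ) : Prop :=
  IsIsoClassCount (fun H inst => @IsClass3Descendant p G _ H inst) k

/-!
Write `a, b, c` for the generators. The relations make `c` and `⁅a, b⁆` central, so every element
is `b ^ y * a ^ x * c ^ z * ⁅a, b⁆ ^ w`; reading off `(x, y, z, w) ∈ (ZMod p)⁴` identifies the group
with an explicit model. There `g` and `h` are conjugate iff they agree in `x, y, z` and, when
`x = y = 0`, also in `w`, giving `(p² - 1) p + p²` classes. An automorphism is determined by the
images of `a, b, c`, and these can be any `a', b'` with independent `(x, y)`-parts together with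
any central `c'` outside `⟨⁅a, b⁆⟩`: the presentation turns such a triple into an endomorphism,
onto because the triple spans the `(x, y, z)`-coordinates and `⁅a', b'⁆` generates `⟨⁅a, b⁆⟩`.
Hence `|Aut| = |GL₂(𝔽_p)| · p⁴ · (p - 1) p`.
-/

open scoped commutatorElement

lemma map_fgComm {α : Type} {G : Type*} [Group G] (f : FreeGroup α →* G) (u v : FreeGroup α) :
    f (fgComm u v) = ⁅(f u)⁻¹, (f v)⁻¹⁆ := by
  simp [fgComm, commutatorElement_def]

lemma Subgroup.commutatorElement_mem {G : Type*} [Group G] (H : Subgroup G) {a b : G} (ha : a ∈ H)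
    (hb : b ∈ H) : ⁅a, b⁆ ∈ H := by
  rw [commutatorElement_def]
  exact H.mul_mem (H.mul_mem (H.mul_mem ha hb) (H.inv_mem ha)) (H.inv_mem hb)

lemma MulEquiv.card_conjClasses {G H : Type*} [Group G] [Group H] (e : G ≃* H) :
    Nat.card (ConjClasses G) = Nat.card (ConjClasses H) :=
  Nat.card_congr
    { toFun := ConjClasses.map e.toMonoidHom
      invFun := ConjClasses.map e.symm.toMonoidHom
      left_inv := fun c => by
        obtain ⟨g, rfl⟩ := ConjClasses.mk_surjective c
        exact congrArg ConjClasses.mk (e.symm_apply_apply g)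
      right_inv := fun c => by
        obtain ⟨g, rfl⟩ := ConjClasses.mk_surjective c
        exact congrArg ConjClasses.mk (e.apply_symm_apply g) }

lemma Matrix.card_det_ne_zero_fin_two {K : Type*} [Field K] [Fintype K] :
    Nat.card {M : Matrix (Fin 2) (Fin 2) K // M.det ≠ 0} =
      (Fintype.card K ^ 2 - 1) * (Fintype.card K ^ 2 - Fintype.card K) := by
  rw [Nat.card_congr ((Equiv.subtypeEquivRight fun M => ?_).trans
    Submonoid.unitsTypeEquivIsUnitSubmonoid.toEquiv.symm), Matrix.card_GL_field, Fin.prod_univ_two]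
  · simp
  · rw [IsUnit.mem_submonoid_iff, Matrix.isUnit_iff_isUnit_det, isUnit_iff_ne_zero]

namespace ClassTwoGroup

variable {p n : ℕ} {R : Set (FreeGroup (Fin n))}

def mk : FreeGroup (Fin n) →* ClassTwoGroup p n R := PresentedGroup.mk _

def of (i : Fin n) : ClassTwoGroup p n R := mk (FreeGroup.of i)

lemma mk_surjective : Function.Surjective (mk : FreeGroup (Fin n) →* ClassTwoGroup p n R) :=
  PresentedGroup.mk_surjective _

lemma closure_range_of : Subgroup.closure (Set.range (of : Fin n → ClassTwoGroup p n R)) = ⊤ :=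
  PresentedGroup.closure_range_of _

lemma mk_eq_one {r : FreeGroup (Fin n)} (hr : r ∈ classTwoRels p n R) :
    (mk r : ClassTwoGroup p n R) = 1 :=
  (QuotientGroup.eq_one_iff _).mpr (Subgroup.subset_normalClosure hr)

lemma pow_eq_one (g : ClassTwoGroup p n R) : g ^ p = 1 := by
  obtain ⟨w, rfl⟩ := mk_surjective g
  rw [← map_pow]
  exact mk_eq_one (.inl (.inr ⟨w, rfl⟩))

lemma commutatorElement_mem_center (g h : ClassTwoGroup p n R) :
    ⁅g, h⁆ ∈ Subgroup.center (ClassTwoGroup p n R) := by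
  obtain ⟨u, rfl⟩ := mk_surjective g
  obtain ⟨v, rfl⟩ := mk_surjective h
  refine Subgroup.mem_center_iff.mpr fun k => ?_
  obtain ⟨w, rfl⟩ := mk_surjective k
  have h1 := mk_eq_one (p := p) (R := R) (.inr ⟨u⁻¹, v⁻¹, w, rfl⟩)
  rw [map_fgComm, map_fgComm, commutatorElement_eq_one_iff_commute, Commute.inv_inv_iff] at h1
  simpa using h1.eq.symm

variable {H : Type*} [Group H]

lemma lift_rels {f : Fin n → H} (hexp : ∀ h : H, h ^ p = 1)
    (hcomm : ∀ g h : H, ⁅g, h⁆ ∈ Subgroup.center H) (hR : ∀ r ∈ R, FreeGroup.lift f r = 1) :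
    ∀ r ∈ classTwoRels p n R, FreeGroup.lift f r = 1 := by
  rintro r ((hr | ⟨w, rfl⟩) | ⟨u, v, w, rfl⟩)
  · exact hR r hr
  · rw [map_pow, hexp]
  · rw [map_fgComm, commutatorElement_eq_one_iff_commute, Commute.inv_inv_iff, map_fgComm]
    exact Subgroup.mem_center_iff.mp (hcomm _ _) _ |>.symm

def lift {f : Fin n → H} (hexp : ∀ h : H, h ^ p = 1)
    (hcomm : ∀ g h : H, ⁅g, h⁆ ∈ Subgroup.center H) (hR : ∀ r ∈ R, FreeGroup.lift f r = 1) :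
    ClassTwoGroup p n R →* H :=
  PresentedGroup.toGroup (lift_rels hexp hcomm hR)

lemma lift_of {f : Fin n → H} (hexp : ∀ h : H, h ^ p = 1)
    (hcomm : ∀ g h : H, ⁅g, h⁆ ∈ Subgroup.center H) (hR : ∀ r ∈ R, FreeGroup.lift f r = 1)
    (i : Fin n) : lift hexp hcomm hR (of i) = f i :=
  PresentedGroup.toGroup.of _

end ClassTwoGroup

/-- Coordinates `(x, y, z, w)` stand for `b ^ y * a ^ x * c ^ z * ⁅a, b⁆ ^ w`; moving `a ^ x` past
`b ^ y'` produces the factor `⁅a, b⁆ ^ (x * y')`, whence the multiplication law. -/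
@[ext] structure Model431 (p : ℕ) where
  x : ZMod p
  y : ZMod p
  z : ZMod p
  w : ZMod p

namespace Model431

variable {p : ℕ}

instance : Mul (Model431 p) := ⟨fun g h => ⟨g.x + h.x, g.y + h.y, g.z + h.z, g.w + h.w + g.x * h.y⟩⟩
instance : One (Model431 p) := ⟨⟨0, 0, 0, 0⟩⟩
instance : Inv (Model431 p) := ⟨fun g => ⟨-g.x, -g.y, -g.z, -g.w + g.x * g.y⟩⟩

@[simp] lemma mul_x (g h : Model431 p) : (g * h).x = g.x + h.x := rfl
@[simp] lemma mul_y (g h : Model431 p) : (g * h).y = g.y + h.y := rfl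
@[simp] lemma mul_z (g h : Model431 p) : (g * h).z = g.z + h.z := rfl
@[simp] lemma mul_w (g h : Model431 p) : (g * h).w = g.w + h.w + g.x * h.y := rfl
@[simp] lemma one_x : (1 : Model431 p).x = 0 := rfl
@[simp] lemma one_y : (1 : Model431 p).y = 0 := rfl
@[simp] lemma one_z : (1 : Model431 p).z = 0 := rfl
@[simp] lemma one_w : (1 : Model431 p).w = 0 := rfl
@[simp] lemma inv_x (g : Model431 p) : g⁻¹.x = -g.x := rfl
@[simp] lemma inv_y (g : Model431 p) : g⁻¹.y = -g.y := rfl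
@[simp] lemma inv_z (g : Model431 p) : g⁻¹.z = -g.z := rfl
@[simp] lemma inv_w (g : Model431 p) : g⁻¹.w = -g.w + g.x * g.y := rfl

instance : Group (Model431 p) :=
  Group.ofLeftAxioms (fun _ _ _ => by ext <;> simp <;> ring) (fun _ => by ext <;> simp)
    (fun _ => by ext <;> simp)

def A : Model431 p := ⟨1, 0, 0, 0⟩
def B : Model431 p := ⟨0, 1, 0, 0⟩
def C : Model431 p := ⟨0, 0, 1, 0⟩
def T : Model431 p := ⟨0, 0, 0, 1⟩

def equivProd : Model431 p ≃ ZMod p × ZMod p × ZMod p × ZMod p where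
  toFun g := (g.x, g.y, g.z, g.w)
  invFun v := ⟨v.1, v.2.1, v.2.2.1, v.2.2.2⟩

instance [NeZero p] : Finite (Model431 p) := .of_equiv _ equivProd.symm

lemma pow_eq (g : Model431 p) (n : ℕ) :
    g ^ n = ⟨n * g.x, n * g.y, n * g.z, n * g.w + n.choose 2 * (g.x * g.y)⟩ := by
  induction n with
  | zero => ext <;> simp
  | succ n ih =>
    ext <;> simp [pow_succ, ih, Nat.choose_succ_succ'] <;> ring

@[simp] lemma pow_x (g : Model431 p) (n : ℕ) : (g ^ n).x = n * g.x := by rw [pow_eq]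
@[simp] lemma pow_y (g : Model431 p) (n : ℕ) : (g ^ n).y = n * g.y := by rw [pow_eq]
@[simp] lemma pow_z (g : Model431 p) (n : ℕ) : (g ^ n).z = n * g.z := by rw [pow_eq]
@[simp] lemma pow_w (g : Model431 p) (n : ℕ) :
    (g ^ n).w = n * g.w + n.choose 2 * (g.x * g.y) := by rw [pow_eq]

lemma pow_prime_eq_one (hp : p.Prime) (hp2 : p ≠ 2) (g : Model431 p) : g ^ p = 1 := by
  have hchoose : ((p.choose 2 : ℕ) : ZMod p) = 0 :=
    (ZMod.natCast_eq_zero_iff _ _).mpr (hp.dvd_choose_self two_ne_zero (hp.two_le.lt_of_ne' hp2))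
  ext <;> simp [hchoose]

lemma commutatorElement_eq (g h : Model431 p) : ⁅g, h⁆ = ⟨0, 0, 0, g.x * h.y - g.y * h.x⟩ := by
  ext <;> simp [commutatorElement_def]
  ring

lemma commute_iff {g h : Model431 p} : Commute g h ↔ g.x * h.y = g.y * h.x := by
  rw [← commutatorElement_eq_one_iff_commute, commutatorElement_eq]
  simp [Model431.ext_iff, sub_eq_zero]

lemma mem_center_iff {g : Model431 p} : g ∈ Subgroup.center (Model431 p) ↔ g.x = 0 ∧ g.y = 0 := by
  refine ⟨fun hg => ?_, fun ⟨hx, hy⟩ => Subgroup.mem_center_iff.mpr fun k => ?_⟩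
  · have hA := commute_iff.mp (Subgroup.mem_center_iff.mp hg A)
    have hB := commute_iff.mp (Subgroup.mem_center_iff.mp hg B)
    simp_all [A, B]
  · exact commute_iff.mpr (by simp [hx, hy])

lemma commutatorElement_mem_center (g h : Model431 p) : ⁅g, h⁆ ∈ Subgroup.center (Model431 p) := by
  simp [mem_center_iff, commutatorElement_eq]

lemma commutatorElement_A_B : ⁅(A : Model431 p), (B : Model431 p)⁆ = T := by
  simp [commutatorElement_eq, A, B, T]

lemma eq_top_of_mem_T_of_forall_exists [NeZero p] {H : Subgroup (Model431 p)} (hT : T ∈ H)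
    (hH : ∀ g : Model431 p, ∃ h ∈ H, h.x = g.x ∧ h.y = g.y ∧ h.z = g.z) : H = ⊤ := by
  refine eq_top_iff.mpr fun g _ => ?_
  obtain ⟨h, hh, hx, hy, hz⟩ := hH g
  have hg : g = h * T ^ (g.w - h.w).val := by ext <;> simp [T, hx, hy, hz]
  exact hg ▸ H.mul_mem hh (H.pow_mem hT _)

lemma closure_A_B_C [NeZero p] : Subgroup.closure (Set.range ![(A : Model431 p), B, C]) = ⊤ := by
  have hA : A ∈ Subgroup.closure (Set.range ![(A : Model431 p), B, C]) :=
    Subgroup.subset_closure ⟨0, rfl⟩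
  have hB : B ∈ Subgroup.closure (Set.range ![(A : Model431 p), B, C]) :=
    Subgroup.subset_closure ⟨1, rfl⟩
  have hC : C ∈ Subgroup.closure (Set.range ![(A : Model431 p), B, C]) :=
    Subgroup.subset_closure ⟨2, rfl⟩
  have hT : T ∈ Subgroup.closure (Set.range ![(A : Model431 p), B, C]) :=
    commutatorElement_A_B (p := p) ▸ Subgroup.commutatorElement_mem _ hA hB
  refine eq_top_of_mem_T_of_forall_exists hT fun g => ?_
  refine ⟨B ^ g.y.val * A ^ g.x.val * C ^ g.z.val, ?_, ?_⟩
  · exact Subgroup.mul_mem _ (Subgroup.mul_mem _ (Subgroup.pow_mem _ hB _)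
      (Subgroup.pow_mem _ hA _)) (Subgroup.pow_mem _ hC _)
  · simp [A, B, C]

end Model431

def rels431 : Set (FreeGroup (Fin 3)) :=
  {fgComm (FreeGroup.of 2) (FreeGroup.of 0), fgComm (FreeGroup.of 2) (FreeGroup.of 1)}

abbrev Group431 (p : ℕ) : Type := ClassTwoGroup p 3 rels431

namespace Group431

open ClassTwoGroup

variable {p : ℕ}

def lift {H : Type*} [Group H] (hexp : ∀ h : H, h ^ p = 1)
    (hcomm : ∀ g h : H, ⁅g, h⁆ ∈ Subgroup.center H) {a b c : H} (hca : Commute c a)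
    (hcb : Commute c b) : Group431 p →* H :=
  ClassTwoGroup.lift (f := ![a, b, c]) hexp hcomm (by
    rintro r (rfl | rfl) <;>
      simp [map_fgComm, commutatorElement_eq_one_iff_commute, hca, hcb])

lemma lift_of {H : Type*} [Group H] (hexp : ∀ h : H, h ^ p = 1)
    (hcomm : ∀ g h : H, ⁅g, h⁆ ∈ Subgroup.center H) {a b c : H} (hca : Commute c a)
    (hcb : Commute c b) (i : Fin 3) : lift hexp hcomm hca hcb (of i) = ![a, b, c] i :=
  ClassTwoGroup.lift_of _ _ _ i

def toModel (hp : p.Prime) (hp2 : p ≠ 2) : Group431 p →* Model431 p :=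
  lift (Model431.pow_prime_eq_one hp hp2) Model431.commutatorElement_mem_center
    (a := Model431.A) (b := Model431.B) (c := Model431.C)
    (Model431.commute_iff.mpr (by simp [Model431.A, Model431.C]))
    (Model431.commute_iff.mpr (by simp [Model431.B, Model431.C]))

lemma toModel_of (hp : p.Prime) (hp2 : p ≠ 2) (i : Fin 3) :
    toModel hp hp2 (of i) = ![Model431.A, Model431.B, Model431.C] i :=
  lift_of _ _ _ _ i

local notation "a" => (of 0 : Group431 p)
local notation "b" => (of 1 : Group431 p)
local notation "c" => (of 2 : Group431 p)

lemma commute_c_of_mem {i : Fin 3} (h : fgComm (FreeGroup.of 2) (FreeGroup.of i) ∈ rels431) :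
    Commute c (of i : Group431 p) := by
  have h1 := mk_eq_one (p := p) (.inl (.inl h))
  rwa [map_fgComm, commutatorElement_eq_one_iff_commute, Commute.inv_inv_iff] at h1

lemma commute_c (g : Group431 p) : Commute g c := by
  have hle : Subgroup.closure (Set.range of) ≤ Subgroup.centralizer {c} := by
    refine (Subgroup.closure_le _).mpr (Set.range_subset_iff.mpr fun i => ?_)
    refine Subgroup.mem_centralizer_singleton_iff.mpr ?_
    fin_cases i
    exacts [(commute_c_of_mem (by simp [rels431])).eq.symm,
      (commute_c_of_mem (by simp [rels431])).eq.symm, rfl]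
  rw [closure_range_of] at hle
  exact Subgroup.mem_centralizer_singleton_iff.mp (hle (Subgroup.mem_top g))

lemma commute_commutatorElement (g : Group431 p) : Commute g ⁅a, b⁆ :=
  Subgroup.mem_center_iff.mp (commutatorElement_mem_center _ _) g

lemma pow_mul_b (x : ℕ) : a ^ x * b = b * a ^ x * ⁅a, b⁆ ^ x := by
  induction x with
  | zero => simp
  | succ x ih =>
    have hab : a * b = b * a * ⁅a, b⁆ :=
      calc a * b = ⁅a, b⁆ * (b * a) := by rw [commutatorElement_def]; group
        _ = b * a * ⁅a, b⁆ := (commute_commutatorElement _).eq.symm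
    calc a ^ (x + 1) * b = a * (a ^ x * b) := by rw [pow_succ', mul_assoc]
      _ = a * b * a ^ x * ⁅a, b⁆ ^ x := by rw [ih]; simp only [mul_assoc]
      _ = b * a ^ (x + 1) * ⁅a, b⁆ ^ (x + 1) := by
        rw [hab, mul_assoc (b * a), (commute_commutatorElement _).symm.eq]
        simp only [pow_succ', mul_assoc]

def normalForm (x y z w : ℕ) : Group431 p := b ^ y * a ^ x * (c ^ z * ⁅a, b⁆ ^ w)

lemma commute_c_pow_mul_commutatorElement_pow (z w : ℕ) (g : Group431 p) : Commute (c ^ z * ⁅a, b⁆ ^ w) g :=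
  ((commute_c g).symm.pow_left z).mul_left ((commute_commutatorElement g).symm.pow_left w)

lemma normalForm_mul_a (x y z w : ℕ) : normalForm x y z w * a = normalForm (x + 1) y z w := by
  rw [normalForm, mul_assoc, (commute_c_pow_mul_commutatorElement_pow z w a).eq, normalForm, pow_succ]
  simp only [mul_assoc]

lemma normalForm_mul_b (x y z w : ℕ) : normalForm x y z w * b = normalForm x (y + 1) z (x + w) := by
  rw [normalForm, mul_assoc, (commute_c_pow_mul_commutatorElement_pow z w b).eq, ← mul_assoc, mul_assoc (b ^ y),
    pow_mul_b, normalForm, pow_succ, pow_add ⁅a, b⁆ x w]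
  simp only [mul_assoc]
  rw [((commute_c _).pow_right z).left_comm]

lemma normalForm_mul_c (x y z w : ℕ) : normalForm x y z w * c = normalForm x y (z + 1) w := by
  rw [normalForm, mul_assoc, mul_assoc, (commute_c _).eq, normalForm, pow_succ']
  simp only [mul_assoc]

lemma exists_eq_normalForm [NeZero p] (g : Group431 p) : ∃ x y z w, g = normalForm x y z w := by
  have hfin : ∀ h ∈ Set.range (of : Fin 3 → Group431 p), IsOfFinOrder h := fun h _ =>
    isOfFinOrder_iff_pow_eq_one.mpr ⟨p, NeZero.pos p, pow_eq_one h⟩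
  have hg : g ∈ Submonoid.closure (Set.range of) := by
    rw [← Subgroup.closure_toSubmonoid_of_isOfFinOrder hfin, closure_range_of]
    exact Subgroup.mem_top g
  induction hg using Submonoid.closure_induction_right with
  | one => exact ⟨0, 0, 0, 0, by simp [normalForm]⟩
  | mul_right g _ _ hi ih =>
    obtain ⟨i, rfl⟩ := hi
    obtain ⟨x, y, z, w, rfl⟩ := ih
    obtain rfl | rfl | rfl : i = 0 ∨ i = 1 ∨ i = 2 := by fin_cases i <;> simp
    exacts [⟨_, _, _, _, normalForm_mul_a x y z w⟩, ⟨_, _, _, _, normalForm_mul_b x y z w⟩,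
      ⟨_, _, _, _, normalForm_mul_c x y z w⟩]

lemma toModel_normalForm (hp : p.Prime) (hp2 : p ≠ 2) (x y z w : ℕ) :
    toModel hp hp2 (normalForm x y z w) = ⟨x, y, z, w⟩ := by
  simp only [normalForm, map_mul, map_pow, map_commutatorElement, toModel_of]
  ext <;> simp [Model431.commutatorElement_eq, Model431.A, Model431.B, Model431.C]

lemma toModel_bijective (hp : p.Prime) (hp2 : p ≠ 2) : Function.Bijective (toModel hp hp2) := by
  have : NeZero p := ⟨hp.ne_zero⟩
  refine ⟨fun g g' h => ?_, fun m => ⟨normalForm m.x.val m.y.val m.z.val m.w.val, ?_⟩⟩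
  · obtain ⟨x, y, z, w, rfl⟩ := exists_eq_normalForm g
    obtain ⟨x', y', z', w', rfl⟩ := exists_eq_normalForm g'
    simp only [toModel_normalForm, Model431.mk.injEq, ZMod.natCast_eq_natCast_iff] at h
    obtain ⟨hx, hy, hz, hw⟩ := h
    simp only [normalForm, pow_eq_pow_of_modEq hx (pow_eq_one _), pow_eq_pow_of_modEq hy (pow_eq_one _),
      pow_eq_pow_of_modEq hz (pow_eq_one _), pow_eq_pow_of_modEq hw (pow_eq_one _)]
  · simp [toModel_normalForm]

noncomputable def equivModel (hp : p.Prime) (hp2 : p ≠ 2) : Group431 p ≃* Model431 p :=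
  MulEquiv.ofBijective _ (toModel_bijective hp hp2)

end Group431

namespace Model431

variable {p : ℕ}

lemma mul_mul_inv (k g : Model431 p) :
    k * g * k⁻¹ = ⟨g.x, g.y, g.z, g.w + k.x * g.y - k.y * g.x⟩ := by
  ext <;> simp
  ring

lemma isConj_iff [Fact p.Prime] {g h : Model431 p} :
    IsConj g h ↔ g.x = h.x ∧ g.y = h.y ∧ g.z = h.z ∧ (g.x = 0 ∧ g.y = 0 → g.w = h.w) := by
  rw [_root_.isConj_iff]
  constructor
  · rintro ⟨k, rfl⟩
    simp +contextual [mul_mul_inv]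
  · rintro ⟨hx, hy, hz, hw⟩
    by_cases hgx : g.x = 0
    · by_cases hgy : g.y = 0
      · exact ⟨1, by ext <;> simp_all⟩
      · refine ⟨⟨(h.w - g.w) / g.y, 0, 0, 0⟩, ?_⟩
        rw [mul_mul_inv]
        ext <;> simp [← hx, ← hy, ← hz, hgy]
    · refine ⟨⟨0, -(h.w - g.w) / g.x, 0, 0⟩, ?_⟩
      rw [mul_mul_inv]
      ext <;> simp [← hx, ← hy, ← hz, hgx]

def conjInvariant (g : Model431 p) : ({v : ZMod p × ZMod p // v ≠ 0} × ZMod p) ⊕ (ZMod p × ZMod p) :=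
  if h : (g.x, g.y) = 0 then .inr (g.z, g.w) else .inl (⟨(g.x, g.y), h⟩, g.z)

lemma isConj_iff_conjInvariant_eq [Fact p.Prime] {g h : Model431 p} :
    IsConj g h ↔ conjInvariant g = conjInvariant h := by
  rw [isConj_iff, conjInvariant, conjInvariant]
  split_ifs with hg hh hh <;> simp only [Prod.mk_eq_zero] at hg hh <;> simp [Prod.ext_iff] <;>
    grind

lemma conjInvariant_surjective : Function.Surjective (conjInvariant (p := p)) := by
  rintro (⟨⟨⟨x, y⟩, hv⟩, z⟩ | ⟨z, w⟩)
  · exact ⟨⟨x, y, z, 0⟩, by simp [conjInvariant, hv]⟩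
  · exact ⟨⟨0, 0, z, w⟩, by simp [conjInvariant]⟩

noncomputable def conjClassesEquiv [Fact p.Prime] :
    ConjClasses (Model431 p) ≃ ({v : ZMod p × ZMod p // v ≠ 0} × ZMod p) ⊕ (ZMod p × ZMod p) :=
  (Quotient.congrRight fun _ _ => isConj_iff_conjInvariant_eq).trans
    (Setoid.quotientKerEquivOfSurjective _ conjInvariant_surjective)

lemma card_conjClasses [Fact p.Prime] : Nat.card (ConjClasses (Model431 p)) = p ^ 3 + p ^ 2 - p := by
  have := (Fact.out : p.Prime).pos
  rw [Nat.card_congr conjClassesEquiv, Nat.card_sum, Nat.card_prod, Nat.card_prod,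
    Nat.card_eq_fintype_card, Fintype.card_subtype_compl]
  simp only [Nat.card_eq_fintype_card, Fintype.card_prod, ZMod.card, Fintype.card_unique]
  have h1 : 1 ≤ p * p := Nat.one_le_iff_ne_zero.mpr (by positivity)
  have h2 : p ≤ p ^ 3 + p ^ 2 := le_add_left (Nat.le_self_pow (by norm_num) p)
  zify [h1, h2]
  ring

def IsAutTriple (a b c : Model431 p) : Prop :=
  a.x * b.y - a.y * b.x ≠ 0 ∧ c.x = 0 ∧ c.y = 0 ∧ c.z ≠ 0

lemma apply_T (α : MulAut (Model431 p)) :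
    α T = ⟨0, 0, 0, (α A).x * (α B).y - (α A).y * (α B).x⟩ := by
  rw [← commutatorElement_A_B, map_commutatorElement, commutatorElement_eq]

lemma isAutTriple_apply [Fact p.Prime] (α : MulAut (Model431 p)) : IsAutTriple (α A) (α B) (α C) := by
  set d := (α A).x * (α B).y - (α A).y * (α B).x
  have hd : d ≠ 0 := by
    intro hd
    have h1 : α T = α 1 := by rw [apply_T, map_one]; ext <;> simp [d, hd]
    simpa [T] using congrArg w (α.injective h1)
  obtain ⟨hx, hy⟩ := mem_center_iff.mp
    (MulEquivClass.apply_mem_center α (mem_center_iff.mpr ⟨rfl, rfl⟩ : (C : Model431 p) ∈ _))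
  refine ⟨hd, hx, hy, fun hz => ?_⟩
  have h1 : α C = α (T ^ ((α C).w / d).val) := by
    rw [map_pow, apply_T]
    ext <;> simp [hx, hy, hz, d, hd]
  simpa [C, T] using congrArg z (α.injective h1)

lemma eq_top_of_isAutTriple [Fact p.Prime] {a b c : Model431 p} (h : IsAutTriple a b c)
    {H : Subgroup (Model431 p)} (ha : a ∈ H) (hb : b ∈ H) (hc : c ∈ H) : H = ⊤ := by
  obtain ⟨hd, hcx, hcy, hcz⟩ := h
  set d := a.x * b.y - a.y * b.x
  refine eq_top_of_mem_T_of_forall_exists ?_ fun g => ?_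
  · have hT : T = ⁅a, b⁆ ^ d⁻¹.val := by
      rw [commutatorElement_eq]
      ext <;> simp [T, d, hd]
    exact hT ▸ H.pow_mem (H.commutatorElement_mem ha hb) _
  · -- Cramer's rule for the `(x, y, z)`-coordinates of `a ^ i * b ^ j * c ^ k`
    set i := (g.x * b.y - g.y * b.x) / d
    set j := (a.x * g.y - a.y * g.x) / d
    set k := (g.z - i * a.z - j * b.z) / c.z
    refine ⟨a ^ i.val * b ^ j.val * c ^ k.val,
      H.mul_mem (H.mul_mem (H.pow_mem ha _) (H.pow_mem hb _)) (H.pow_mem hc _), ?_, ?_, ?_⟩ <;>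
    · simp only [mul_x, mul_y, mul_z, pow_x, pow_y, pow_z, ZMod.natCast_val, ZMod.cast_id', id,
        hcx, hcy, i, j, k]
      field_simp
      simp only [d]
      ring

lemma exists_mulAut_apply [Fact p.Prime] (hp2 : p ≠ 2) {a b c : Model431 p}
    (h : IsAutTriple a b c) : ∃ α : MulAut (Model431 p), α A = a ∧ α B = b ∧ α C = c := by
  have hp : p.Prime := Fact.out
  have hc : c ∈ Subgroup.center (Model431 p) := mem_center_iff.mpr ⟨h.2.1, h.2.2.1⟩
  let e := Group431.equivModel hp hp2
  let ψ := (Group431.lift (pow_prime_eq_one hp hp2) commutatorElement_mem_center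
    (Subgroup.mem_center_iff.mp hc a).symm (Subgroup.mem_center_iff.mp hc b).symm).comp
      e.symm.toMonoidHom
  have he : ∀ i : Fin 3, e.symm (![A, B, C] i) = ClassTwoGroup.of i := fun i =>
    e.symm_apply_eq.mpr (Group431.toModel_of hp hp2 i).symm
  have hψ : ∀ i : Fin 3, ψ (![A, B, C] i) = ![a, b, c] i := fun i => by
    rw [MonoidHom.comp_apply, MulEquiv.coe_toMonoidHom, he]
    exact Group431.lift_of _ _ _ _ i
  have hsurj : Function.Surjective ψ := MonoidHom.range_eq_top.mp
    (eq_top_of_isAutTriple h ⟨A, hψ 0⟩ ⟨B, hψ 1⟩ ⟨C, hψ 2⟩)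
  exact ⟨MulEquiv.ofBijective ψ ⟨Finite.injective_iff_surjective.mpr hsurj, hsurj⟩, hψ 0, hψ 1, hψ 2⟩

lemma mulAut_ext {α β : MulAut (Model431 p)} [NeZero p] (hA : α A = β A) (hB : α B = β B)
    (hC : α C = β C) : α = β := by
  refine MulEquiv.toMonoidHom_injective (MonoidHom.eq_of_eqOn_dense closure_A_B_C ?_)
  rintro _ ⟨i, rfl⟩
  fin_cases i
  exacts [hA, hB, hC]

noncomputable def mulAutEquiv [Fact p.Prime] (hp2 : p ≠ 2) :
    MulAut (Model431 p) ≃ {t : Model431 p × Model431 p × Model431 p // IsAutTriple t.1 t.2.1 t.2.2} :=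
  Equiv.ofBijective (fun α => ⟨(α A, α B, α C), isAutTriple_apply α⟩) ⟨fun α β h => by
    simp only [Subtype.mk.injEq, Prod.mk.injEq] at h
    exact mulAut_ext h.1 h.2.1 h.2.2, fun ⟨(a, b, c), h⟩ => by
    obtain ⟨α, hA, hB, hC⟩ := exists_mulAut_apply hp2 h
    exact ⟨α, by simp [hA, hB, hC]⟩⟩

def autTripleEquiv : {t : Model431 p × Model431 p × Model431 p // IsAutTriple t.1 t.2.1 t.2.2} ≃
    {M : Matrix (Fin 2) (Fin 2) (ZMod p) // M.det ≠ 0} × ((ZMod p × ZMod p) × (ZMod p × ZMod p)) ×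
      ({z : ZMod p // z ≠ 0} × ZMod p) where
  toFun t := (⟨!![t.1.1.x, t.1.2.1.x; t.1.1.y, t.1.2.1.y], by
      simpa [Matrix.det_fin_two, mul_comm] using t.2.1⟩,
    ((t.1.1.z, t.1.1.w), (t.1.2.1.z, t.1.2.1.w)), (⟨t.1.2.2.z, t.2.2.2.2⟩, t.1.2.2.w))
  invFun s := ⟨(⟨s.1.1 0 0, s.1.1 1 0, s.2.1.1.1, s.2.1.1.2⟩,
      ⟨s.1.1 0 1, s.1.1 1 1, s.2.1.2.1, s.2.1.2.2⟩, ⟨0, 0, s.2.2.1, s.2.2.2⟩),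
    by simpa [IsAutTriple, Matrix.det_fin_two, mul_comm] using And.intro s.1.2 s.2.2.1.2⟩
  left_inv t := by
    obtain ⟨⟨a, b, c⟩, -, hx, hy, -⟩ := t
    dsimp only at hx hy
    ext <;> simp [hx, hy]
  right_inv s := by
    obtain ⟨⟨M, hM⟩, _, _⟩ := s
    simp only [Prod.mk.injEq, Subtype.mk.injEq]
    exact ⟨(Matrix.eta_fin_two M).symm, trivial⟩

lemma card_mulAut [Fact p.Prime] (hp2 : p ≠ 2) :
    Nat.card (MulAut (Model431 p)) = (p - 1) * (p ^ 2 - 1) * (p ^ 2 - p) * p ^ 5 := by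
  rw [Nat.card_congr ((mulAutEquiv hp2).trans autTripleEquiv), Nat.card_prod, Nat.card_prod,
    Nat.card_prod, Matrix.card_det_ne_zero_fin_two]
  simp only [Nat.card_eq_fintype_card, Fintype.card_subtype_compl, Fintype.card_prod, ZMod.card,
    Fintype.card_unique]
  ring

end Model431

theorem group_4_3_1 (p : ℕ) (hp : p.Prime) (h5 : 5 ≤ p) :
    Nat.card (ConjClasses (ClassTwoGroup p 3 ({fgComm (FreeGroup.of (2 : Fin 3)) (FreeGroup.of (0 : Fin 3)), fgComm (FreeGroup.of (2 : Fin 3)) (FreeGroup.of (1 : Fin 3))} : Set (FreeGroup (Fin 3))))) = p ^ 3 + p ^ 2 - p ∧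
    Nat.card (MulAut (ClassTwoGroup p 3 ({fgComm (FreeGroup.of (2 : Fin 3)) (FreeGroup.of (0 : Fin 3)), fgComm (FreeGroup.of (2 : Fin 3)) (FreeGroup.of (1 : Fin 3))} : Set (FreeGroup (Fin 3))))) = (p - 1) * (p ^ 2 - 1) * (p ^ 2 - p) * p ^ 5 := by
  have : Fact p.Prime := ⟨hp⟩
  have hp2 : p ≠ 2 := by omega
  let e : Group431 p ≃* Model431 p := Group431.equivModel hp hp2
  exact ⟨(MulEquiv.card_conjClasses e).trans Model431.card_conjClasses,
    (Nat.card_congr (MulAut.congr e).toEquiv).trans (Model431.card_mulAut hp2)⟩
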